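/- Let n ≥ 2, m ≥ 1, let F : X_n^m → X_n^m be a nonexpanding n-ary network, and let h be its associated one-step function. Then for every x ∈ X_n^m and every natural number i, F^i(h^{n−2}(x)) = h^i(h^{n−2}(x)), where F^i and h^j denote i-fold and j-fold compositions respectively. -/
import Mathlib


/-- The state space condition: `x` is a point of `X_n^m`, i.e. every
coordinate lies in `{0, 1, …, n-1}` (viewed inside `ℤ`). -/
def inState (n m : ℕ) (x : Fin m → ℤ) : Prop :=
  ∀ v, 0 ≤ x v ∧ x v ≤ (n : ℤ) - 1

/-- The Chebyshev distance `d∞(x,y) = max_v |x_v - y_v|`, as a natural number. -/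
def dinf {m : ℕ} (x y : Fin m → ℤ) : ℕ :=
  Finset.univ.sup fun v => (x v - y v).natAbs

/-- The one-step function associated to a network `F`:
`h_v(x) = x_v + sgn(f_v(x) - x_v)`. -/
def oneStep {m : ℕ} (F : (Fin m → ℤ) → Fin m → ℤ) (x : Fin m → ℤ) : Fin m → ℤ :=
  fun v => x v + (F x v - x v).sign

lemma sign_eq_self_of_abs_le_one (c : ℤ) (h1 : -1 ≤ c) (h2 : c ≤ 1) : c.sign = c := by
  interval_cases c <;> decide

lemma dinf_le_iff {m : ℕ} (x y : Fin m → ℤ) (c : ℕ) :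
    dinf x y ≤ c ↔ ∀ v, (x v - y v).natAbs ≤ c := by
  simp [dinf, Finset.sup_le_iff]

lemma oneStep_inState (n m : ℕ) (F : (Fin m → ℤ) → Fin m → ℤ)
    (hF : ∀ x, inState n m x → inState n m (F x))
    (z : Fin m → ℤ) (hz : inState n m z) : inState n m (oneStep F z) := by
  intro v
  have h0 := hz v
  have h1 := hF z hz v
  show 0 ≤ z v + (F z v - z v).sign ∧ z v + (F z v - z v).sign ≤ (n : ℤ) - 1
  rcases lt_trichotomy (F z v - z v) 0 with hc | hc | hc
  · rw [Int.sign_eq_neg_one_of_neg hc]; omega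
  · rw [hc, Int.sign_zero]; omega
  · rw [Int.sign_eq_one_of_pos hc]; omega

lemma dinf_oneStep {m : ℕ} (F : (Fin m → ℤ) → Fin m → ℤ) (z : Fin m → ℤ) :
    dinf (oneStep F z) z ≤ 1 := by
  rw [dinf_le_iff]
  intro v
  show (z v + (F z v - z v).sign - z v).natAbs ≤ 1
  rcases lt_trichotomy (F z v - z v) 0 with hc | hc | hc
  · rw [Int.sign_eq_neg_one_of_neg hc]; omega
  · rw [hc, Int.sign_zero]; omega
  · rw [Int.sign_eq_one_of_pos hc]; omega

lemma oneStep_eq_of_close {m : ℕ} (F : (Fin m → ℤ) → Fin m → ℤ) (z : Fin m → ℤ)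
    (hd : ∀ v, (F z v - z v).natAbs ≤ 1) : oneStep F z = F z := by
  funext v
  show z v + (F z v - z v).sign = F z v
  have h := hd v
  rw [sign_eq_self_of_abs_le_one _ (by omega) (by omega)]
  ring

/-- For a nonexpanding network, the trajectories of `F` and of its one-step
function `h` merge after `n - 2` steps of `h`:
`F^i(h^(n-2)(x)) = h^i(h^(n-2)(x))` for all `i`. -/
theorem trajectories_merge (n m : ℕ) (hn : 2 ≤ n) (hm : 1 ≤ m)
    (F : (Fin m → ℤ) → Fin m → ℤ)
    (hF : ∀ x, inState n m x → inState n m (F x))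
    (hne : ∀ x y, inState n m x → inState n m y → dinf x y ≤ 1 →
      dinf (F x) (F y) ≤ 1) :
    ∀ x, inState n m x → ∀ i : ℕ,
      F^[i] ((oneStep F)^[n - 2] x) = (oneStep F)^[i] ((oneStep F)^[n - 2] x) := by
  intro x hx i
  set y : ℕ → Fin m → ℤ := fun k => (oneStep F)^[k] x with hy
  have hy0 : y 0 = x := rfl
  have hysucc : ∀ k, y (k + 1) = oneStep F (y k) := by
    intro k
    simp only [hy, Function.iterate_succ_apply']
  have hy_state : ∀ k, inState n m (y k) := by
    intro k
    induction k with
    | zero => exact hx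
    | succ k ih => rw [hysucc]; exact oneStep_inState n m F hF _ ih
  have hnexp : ∀ k v, (F (y (k + 1)) v - F (y k) v).natAbs ≤ 1 := by
    intro k v
    have := hne (y (k + 1)) (y k) (hy_state (k + 1)) (hy_state k)
      (by rw [hysucc]; exact dinf_oneStep F (y k))
    exact (dinf_le_iff _ _ 1).mp this v
  -- the main invariant
  have hQ : ∀ k v, (F (y k) v - y k v).natAbs ≤ 1 ∨
      (2 ≤ F (y k) v - y k v ∧ (k : ℤ) ≤ y k v) ∨
      (F (y k) v - y k v ≤ -2 ∧ y k v ≤ (n : ℤ) - 1 - k) := by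
    intro k
    induction k with
    | zero =>
      intro v
      have h0 := hx v
      rw [hy0]
      push_cast
      omega
    | succ k ih =>
      intro v
      have hΔ := hnexp k v
      have hFb := hF _ (hy_state k) v
      have hFb' := hF _ (hy_state (k + 1)) v
      have hyb := hy_state k v
      rcases ih v with h1 | h2 | h3
      · -- |b| ≤ 1 : then y (k+1) v = F (y k) v
        have hs : (F (y k) v - y k v).sign = F (y k) v - y k v :=
          sign_eq_self_of_abs_le_one _ (by omega) (by omega)
        have he : y (k + 1) v = F (y k) v := by
          rw [hysucc]
          show y k v + (F (y k) v - y k v).sign = F (y k) v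
          rw [hs]; ring
        left
        rw [he]
        omega
      · -- b ≥ 2 : y increases
        have hs : (F (y k) v - y k v).sign = 1 :=
          Int.sign_eq_one_of_pos (by omega)
        have he : y (k + 1) v = y k v + 1 := by
          rw [hysucc]
          show y k v + (F (y k) v - y k v).sign = y k v + 1
          rw [hs]
        rw [he]
        push_cast
        omega
      · -- b ≤ -2 : y decreases
        have hs : (F (y k) v - y k v).sign = -1 :=
          Int.sign_eq_neg_one_of_neg (by omega)
        have he : y (k + 1) v = y k v - 1 := by
          rw [hysucc]
          show y k v + (F (y k) v - y k v).sign = y k v - 1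
          rw [hs]; ring
        rw [he]
        push_cast
        omega
  -- at time n-2 every coordinate gap is at most 1
  have hkey : ∀ v, (F (y (n - 2)) v - y (n - 2) v).natAbs ≤ 1 := by
    intro v
    have hFb := hF _ (hy_state (n - 2)) v
    have hyb := hy_state (n - 2) v
    have hcast : ((n - 2 : ℕ) : ℤ) = (n : ℤ) - 2 := by omega
    rcases hQ (n - 2) v with h | h | h
    · exact h
    · rw [hcast] at h; omega
    · rw [hcast] at h; omega
  -- the closeness invariant persists along the h-trajectory
  have hinv : ∀ j, ∀ v, (F (y (n - 2 + j)) v - y (n - 2 + j) v).natAbs ≤ 1 := by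
    intro j
    induction j with
    | zero => exact hkey
    | succ j ih =>
      intro v
      have he : y (n - 2 + (j + 1)) = F (y (n - 2 + j)) := by
        have : n - 2 + (j + 1) = (n - 2 + j) + 1 := rfl
        rw [this, hysucc, oneStep_eq_of_close F _ ih]
      rw [he]
      have := hnexp (n - 2 + j) v
      have he2 : y (n - 2 + j + 1) = F (y (n - 2 + j)) := he
      rw [he2] at this
      exact this
  -- conclude by induction on i
  have hmain : ∀ j, F^[j] (y (n - 2)) = y (n - 2 + j) := by
    intro j
    induction j with
    | zero => rfl
    | succ j ih =>
      rw [Function.iterate_succ_apply', ih]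
      have : n - 2 + (j + 1) = (n - 2 + j) + 1 := rfl
      rw [this, hysucc, oneStep_eq_of_close F _ (hinv j)]
  have hrhs : (oneStep F)^[i] ((oneStep F)^[n - 2] x) = y (n - 2 + i) := by
    rw [hy, ← Function.iterate_add_apply, Nat.add_comm]
  rw [hrhs]
  exact hmain i
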